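/- Let D be an integral domain and * a star operation of finite character on D. Assume that (a) every nonzero x ∈ D is contained in only finitely many maximal *-ideals, and (b) for every maximal *-ideal M of D, the localization D_M is a valuation domain whose value group is order-isomorphic to a complete subgroup of the additive reals. Then D is ~*-sharp, and hence *-sharp. -/

import Mathlib

open scoped nonZeroDivisors

/-- A star operation on an integral domain `D` with quotient field `K`: a map
`I ↦ I*` on (nonzero) fractional ideals such that `D* = D`, `(aI)* = a·I*`,
`I ⊆ I*`, `I ⊆ J → I* ⊆ J*` and `(I*)* = I*`. (The value at `0` is irrelevant.) -/
structure StarOperation (D K : Type*) [CommRing D] [IsDomain D] [Field K]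
    [Algebra D K] [IsFractionRing D K] where
  star : FractionalIdeal D⁰ K → FractionalIdeal D⁰ K
  star_one : star 1 = 1
  star_smul : ∀ (a : K), a ≠ 0 → ∀ I : FractionalIdeal D⁰ K, I ≠ 0 →
    star (FractionalIdeal.spanSingleton D⁰ a * I) = FractionalIdeal.spanSingleton D⁰ a * star I
  le_star : ∀ I : FractionalIdeal D⁰ K, I ≠ 0 → I ≤ star I
  star_mono : ∀ I J : FractionalIdeal D⁰ K, I ≠ 0 → J ≠ 0 → I ≤ J → star I ≤ star J
  star_star : ∀ I : FractionalIdeal D⁰ K, I ≠ 0 → star (star I) = star I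

/-- A subgroup `G` of `(ℝ, +)` is complete if every nonempty subset of `G` which is
bounded above has a supremum in `G`. -/
def AddSubgroup.IsCompleteSubgroup (G : AddSubgroup ℝ) : Prop :=
  ∀ S : Set G, S.Nonempty → BddAbove S → ∃ g : G, IsLUB S g

/-- `R` is a valuation domain whose value group is order-isomorphic to a complete
subgroup of the additive reals. -/
def IsCompleteValuationDomain (R : Type*) [CommRing R] [IsDomain R] : Prop :=
  ∃ _ : ValuationRing R, ∃ G : AddSubgroup ℝ, G.IsCompleteSubgroup ∧
    Nonempty ((ValuationRing.ValueGroup R (FractionRing R))ˣ ≃*o Multiplicative G)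

section StarSharpDefs

variable {D K : Type*} [CommRing D] [IsDomain D] [Field K] [Algebra D K] [IsFractionRing D K]

/-- `D` is sharp with respect to the operation `star` ("`*`-sharp"): whenever
`I ⊇ A·B` for nonzero ideals `I, A, B` of `D`, there exist nonzero ideals `H, J`
with `I* = (HJ)*`, `H* ⊇ A` and `J* ⊇ B`. -/
def IsSharpOp (star : FractionalIdeal D⁰ K → FractionalIdeal D⁰ K) : Prop :=
  ∀ I A B : Ideal D, I ≠ 0 → A ≠ 0 → B ≠ 0 → A * B ≤ I →
    ∃ H J : Ideal D, H ≠ 0 ∧ J ≠ 0 ∧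
      star (I : FractionalIdeal D⁰ K) =
        star ((H : FractionalIdeal D⁰ K) * (J : FractionalIdeal D⁰ K)) ∧
      (A : FractionalIdeal D⁰ K) ≤ star (H : FractionalIdeal D⁰ K) ∧
      (B : FractionalIdeal D⁰ K) ≤ star (J : FractionalIdeal D⁰ K)

/-- `D` is `*`-sharp for the star operation `s`. -/
def StarOperation.IsSharp (s : StarOperation D K) : Prop :=
  IsSharpOp s.star

/-- A star operation has finite character if `I*` is the union of `H*` over the
nonzero finitely generated subideals `H` of `I`. -/
def StarOperation.HasFiniteCharacter (s : StarOperation D K) : Prop :=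
  ∀ I : FractionalIdeal D⁰ K, I ≠ 0 → ∀ x ∈ s.star I,
    ∃ H : FractionalIdeal D⁰ K, H ≠ 0 ∧ (H : Submodule D K).FG ∧ H ≤ I ∧ x ∈ s.star H

/-- `M` is a maximal `*`-ideal for the operation `star`: maximal among the proper
nonzero integral `*`-ideals of `D`. -/
def IsMaxStarIdealOp (star : FractionalIdeal D⁰ K → FractionalIdeal D⁰ K) (M : Ideal D) : Prop :=
  M ≠ 0 ∧ M ≠ ⊤ ∧ star (M : FractionalIdeal D⁰ K) = (M : FractionalIdeal D⁰ K) ∧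
    ∀ J : Ideal D, J ≠ ⊤ → star (J : FractionalIdeal D⁰ K) = (J : FractionalIdeal D⁰ K) →
      M ≤ J → J = M

end StarSharpDefs

/-!
At a maximal `*`-ideal `M` the ring `D_M` is a valuation domain whose values form a complete
subgroup of `ℝ`, so the infimum of the values of a nonzero ideal is again a value. Hence if
`i ⊇ a·b` in `D_M`, then `i = h·j` with `h ⊇ a`, `j ⊇ b`, one of `h, j` being principal.

A nonzero ideal `I ⊇ AB` of `D` lies in only finitely many maximal `*`-ideals. Since in a rank one
valuation domain every nonunit has a power in each nonzero ideal, the local factors at these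
finitely many `M` are the localizations of `H := ⋂ (h_M ∩ D)` and `J := ⋂ (j_M ∩ D)`. Thus
`I·D_M = HJ·D_M` at every maximal `*`-ideal, i.e. `I^{~*} = (HJ)^{~*}`; and as `I ⊆ I^{~*} ⊆ I*`
by finite character, also `I* = (HJ)*`.
-/

theorem AddSubgroup.IsCompleteSubgroup.csInf_mem {G : AddSubgroup ℝ} (hG : G.IsCompleteSubgroup)
    {S : Set ℝ} (hne : S.Nonempty) (hbdd : BddBelow S) (hS : S ⊆ G) : sInf S ∈ G := by
  by_cases hmem : sInf S ∈ S
  · exact hS hmem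
  have hlt : ∀ s ∈ S, sInf S < s := fun s hs =>
    (csInf_le hbdd hs).lt_of_ne fun h => hmem (h ▸ hs)
  -- an infimum that is not attained is approached by differences of elements of `S`
  have hdense : Dense (G : Set ℝ) := by
    refine G.dense_of_not_isolated_zero fun ε hε => ?_
    obtain ⟨s₁, hs₁, h₁⟩ := exists_lt_of_csInf_lt hne (lt_add_of_pos_right (sInf S) hε)
    obtain ⟨s₂, hs₂, h₂⟩ := exists_lt_of_csInf_lt hne (hlt s₁ hs₁)
    exact ⟨s₁ - s₂, sub_mem (hS hs₁) (hS hs₂), by constructor <;> linarith [hlt s₂ hs₂]⟩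
  set T : Set G := {g | -(g : ℝ) ∈ S}
  have hT : ∀ g ∈ T, (g : ℝ) ≤ -sInf S := fun g hg => by linarith [csInf_le hbdd hg]
  obtain ⟨s₀, hs₀⟩ := hne
  obtain ⟨g₁, hg₁G, hg₁⟩ := hdense.exists_between (lt_add_one (-sInf S))
  obtain ⟨g₀, hg₀⟩ := hG T ⟨⟨-s₀, neg_mem (hS hs₀)⟩, by simpa [T] using hs₀⟩
    ⟨⟨g₁, hg₁G⟩, fun g hg => (hT g hg).trans hg₁.1.le⟩
  have hle : -(g₀ : ℝ) ≤ sInf S := le_csInf ⟨s₀, hs₀⟩ fun s hs => by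
    have : (⟨-s, neg_mem (hS hs)⟩ : G) ≤ g₀ := hg₀.1 (by simpa [T] using hs)
    linarith [show -s ≤ (g₀ : ℝ) from this]
  have hge : sInf S ≤ -(g₀ : ℝ) := by
    by_contra! h
    obtain ⟨g, hgG, hg⟩ := hdense.exists_between (show -sInf S < g₀ by linarith)
    have : g₀ ≤ ⟨g, hgG⟩ := hg₀.2 fun t ht => (hT t ht).trans hg.1.le
    linarith [show (g₀ : ℝ) ≤ g from this, hg.2]
  rw [le_antisymm hge hle]
  exact neg_mem g₀.2

theorem Ideal.span_singleton_mul_colon_eq {R : Type*} [CommRing R] {i : Ideal R} {y : R}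
    (hi : i ≤ span {y}) : span {y} * i.colon {y} = i := by
  refine le_antisymm (mul_le.2 fun a ha b hb => ?_) fun x hx => ?_
  · obtain ⟨c, rfl⟩ := mem_span_singleton'.1 ha
    rw [mul_right_comm, mul_assoc]
    exact i.mul_mem_left c (Submodule.mem_colon_singleton.1 hb)
  · obtain ⟨t, rfl⟩ := mem_span_singleton'.1 (hi hx)
    rw [mul_comm t y]
    exact mul_mem_mul (mem_span_singleton_self y) (Submodule.mem_colon_singleton.2 hx)

/-- An additive valuation on the nonzero elements of `R` (its value at `0` is irrelevant). -/
structure CompleteRealValuation (R : Type*) [CommRing R] where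
  G : AddSubgroup ℝ
  isCompleteSubgroup : G.IsCompleteSubgroup
  v : R → ℝ
  v_mul (x y : R) : x ≠ 0 → y ≠ 0 → v (x * y) = v x + v y
  v_le_v_iff_dvd (x y : R) : x ≠ 0 → y ≠ 0 → (v x ≤ v y ↔ x ∣ y)
  v_mem (x : R) : x ≠ 0 → v x ∈ G
  exists_v_eq (g : ℝ) : g ∈ G → 0 ≤ g → ∃ x : R, x ≠ 0 ∧ v x = g

namespace CompleteRealValuation

section

variable {R : Type*} [CommRing R] (V : CompleteRealValuation R)

theorem mem_of_v_le {C : Ideal R} {x y : R} (hx : x ∈ C) (hx0 : x ≠ 0) (hy0 : y ≠ 0)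
    (h : V.v x ≤ V.v y) : y ∈ C := by
  obtain ⟨z, rfl⟩ := (V.v_le_v_iff_dvd x y hx0 hy0).1 h
  exact C.mul_mem_right z hx

theorem le_span_singleton {C : Ideal R} {y : R} (hy0 : y ≠ 0)
    (h : ∀ x ∈ C, x ≠ 0 → V.v y ≤ V.v x) : C ≤ Ideal.span {y} := fun x hx => by
  by_cases hx0 : x = 0
  · simp [hx0]
  · exact Ideal.mem_span_singleton.2 ((V.v_le_v_iff_dvd y x hy0 hx0).1 (h x hx hx0))

noncomputable def vInf (C : Ideal R) : ℝ := sInf (V.v '' ((C : Set R) \ {0}))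

theorem image_nonempty {C : Ideal R} (hC : C ≠ ⊥) : (V.v '' ((C : Set R) \ {0})).Nonempty := by
  obtain ⟨x, hx, hx0⟩ := Submodule.exists_mem_ne_zero_of_ne_bot hC
  exact ⟨V.v x, x, ⟨hx, hx0⟩, rfl⟩

theorem le_vInf {C : Ideal R} (hC : C ≠ ⊥) {c : ℝ} (h : ∀ x ∈ C, x ≠ 0 → c ≤ V.v x) :
    c ≤ V.vInf C :=
  le_csInf (V.image_nonempty hC) (by rintro _ ⟨x, ⟨hx, hx0⟩, rfl⟩; exact h x hx hx0)

theorem mem_of_vInf_lt {C : Ideal R} (hC : C ≠ ⊥) {y : R} (hy0 : y ≠ 0)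
    (h : V.vInf C < V.v y) : y ∈ C := by
  obtain ⟨_, ⟨x, ⟨hx, hx0⟩, rfl⟩, hxy⟩ := exists_lt_of_csInf_lt (V.image_nonempty hC) h
  exact V.mem_of_v_le hx hx0 hy0 hxy.le

variable [IsDomain R]

theorem v_one : V.v 1 = 0 := by
  linarith [V.v_mul 1 1 one_ne_zero one_ne_zero, show V.v (1 * 1) = V.v 1 by rw [mul_one]]

theorem v_nonneg {x : R} (hx : x ≠ 0) : 0 ≤ V.v x :=
  V.v_one ▸ (V.v_le_v_iff_dvd 1 x one_ne_zero hx).2 (one_dvd x)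

theorem v_pow {x : R} (hx : x ≠ 0) (k : ℕ) : V.v (x ^ k) = k * V.v x := by
  induction k with
  | zero => simp [V.v_one]
  | succ k ih => rw [pow_succ, V.v_mul _ _ (pow_ne_zero k hx) hx, ih]; push_cast; ring

theorem bddBelow_image (C : Ideal R) : BddBelow (V.v '' ((C : Set R) \ {0})) :=
  ⟨0, by rintro _ ⟨x, ⟨-, hx0⟩, rfl⟩; exact V.v_nonneg hx0⟩

theorem vInf_le {C : Ideal R} {x : R} (hx : x ∈ C) (hx0 : x ≠ 0) : V.vInf C ≤ V.v x :=
  csInf_le (V.bddBelow_image C) ⟨x, ⟨hx, hx0⟩, rfl⟩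

theorem vInf_nonneg {C : Ideal R} (hC : C ≠ ⊥) : 0 ≤ V.vInf C :=
  V.le_vInf hC fun _ _ => V.v_nonneg

theorem vInf_mem {C : Ideal R} (hC : C ≠ ⊥) : V.vInf C ∈ V.G :=
  V.isCompleteSubgroup.csInf_mem (V.image_nonempty hC) (V.bddBelow_image C)
    (by rintro _ ⟨x, ⟨-, hx0⟩, rfl⟩; exact V.v_mem x hx0)

end

variable {R : Type*} [CommRing R] [IsDomain R]

theorem exists_pow_mem (V : CompleteRealValuation R) {C : Ideal R} (hC : C ≠ ⊥) {σ : R}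
    (hσ0 : σ ≠ 0) (hσ : ¬IsUnit σ) : ∃ k : ℕ, σ ^ k ∈ C := by
  obtain ⟨x, hx, hx0⟩ := Submodule.exists_mem_ne_zero_of_ne_bot hC
  have hσpos : 0 < V.v σ := by
    by_contra! hle
    exact hσ (isUnit_of_dvd_one ((V.v_le_v_iff_dvd σ 1 hσ0 one_ne_zero).1 (V.v_one ▸ hle)))
  obtain ⟨k, hk⟩ := Archimedean.arch (V.v x) hσpos
  refine ⟨k, V.mem_of_v_le hx hx0 (pow_ne_zero k hσ0) ?_⟩
  rwa [V.v_pow hσ0, ← nsmul_eq_mul]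

/-- One factor can be taken principal: generated by an element of `a` of least value if there is
one, and otherwise by an element of value `vInf i - vInf a`, a value by completeness. -/
theorem exists_mul_eq_of_mul_le (V : CompleteRealValuation R) {a b i : Ideal R} (ha : a ≠ ⊥)
    (hi : i ≠ ⊥) (hab : a * b ≤ i) : ∃ h j : Ideal R, h * j = i ∧ a ≤ h ∧ b ≤ j := by
  have hsum : ∀ x ∈ a, ∀ y ∈ b, x ≠ 0 → y ≠ 0 → V.vInf i ≤ V.v x + V.v y :=
    fun x hx y hy hx0 hy0 => V.v_mul x y hx0 hy0 ▸
      V.vInf_le (hab (Ideal.mul_mem_mul hx hy)) (mul_ne_zero hx0 hy0)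
  rcases lt_or_ge (V.vInf i) (V.vInf a) with hia | hai
  · refine ⟨i, ⊤, Ideal.mul_top i, fun x hx => ?_, le_top⟩
    by_cases hx0 : x = 0
    · simp [hx0]
    · exact V.mem_of_vInf_lt hi hx0 (hia.trans_le (V.vInf_le hx hx0))
  by_cases hatt : ∃ x₀ ∈ a, x₀ ≠ 0 ∧ V.v x₀ = V.vInf a
  · obtain ⟨x₀, hx₀, hx₀0, hv⟩ := hatt
    refine ⟨Ideal.span {x₀}, i.colon {x₀}, Ideal.span_singleton_mul_colon_eq
      (V.le_span_singleton hx₀0 fun x hx hx0 => hv ▸ hai.trans (V.vInf_le hx hx0)),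
      V.le_span_singleton hx₀0 fun x hx hx0 => hv ▸ V.vInf_le hx hx0,
      fun y hy => Submodule.mem_colon_singleton.2 (by
        rw [smul_eq_mul, mul_comm]; exact hab (Ideal.mul_mem_mul hx₀ hy))⟩
  push Not at hatt
  obtain ⟨z, hz0, hz⟩ := V.exists_v_eq (V.vInf i - V.vInf a)
    (sub_mem (V.vInf_mem hi) (V.vInf_mem ha)) (by linarith)
  refine ⟨i.colon {z}, Ideal.span {z}, ?_, fun x hx => ?_,
    V.le_span_singleton hz0 fun y hy hy0 => ?_⟩
  · rw [mul_comm]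
    exact Ideal.span_singleton_mul_colon_eq (V.le_span_singleton hz0 fun x hx hx0 => by
      linarith [V.vInf_le hx hx0, V.vInf_nonneg ha])
  · rw [Submodule.mem_colon_singleton, smul_eq_mul]
    by_cases hx0 : x = 0
    · simp [hx0]
    have hlt := (V.vInf_le hx hx0).lt_of_ne (hatt x hx hx0).symm
    exact V.mem_of_vInf_lt hi (mul_ne_zero hx0 hz0) (by rw [V.v_mul x z hx0 hz0]; linarith)
  · have := V.le_vInf ha fun x hx hx0 => show V.vInf i - V.v y ≤ V.v x by
      linarith [hsum x hx y hy hx0 hy0]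
    linarith

end CompleteRealValuation

theorem IsCompleteValuationDomain.nonempty_completeRealValuation {R : Type*} [CommRing R]
    [IsDomain R] (h : IsCompleteValuationDomain R) : Nonempty (CompleteRealValuation R) := by
  classical
  obtain ⟨_, G, hG, ⟨φ⟩⟩ := h
  set K := FractionRing R
  set v := ValuationRing.valuation R K
  have hv : v.Integers R :=
    ⟨IsFractionRing.injective R K, fun x => (ValuationRing.mem_integer_iff R K _).2 ⟨x, rfl⟩,
      fun _ hr => (ValuationRing.mem_integer_iff R K _).1 hr⟩
  have hne : ∀ {x : R}, x ≠ 0 → v (algebraMap R K x) ≠ 0 := fun hx => by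
    rwa [Valuation.ne_zero_iff, map_ne_zero_iff _ (IsFractionRing.injective R K)]
  -- `-log` of the valuation, read through the order isomorphism `φ`
  let w (x : R) : ℝ :=
    if hx : x = 0 then 0 else -((Multiplicative.toAdd (φ (Units.mk0 _ (hne hx))) : G) : ℝ)
  have hw : ∀ {x : R} (hx : x ≠ 0),
      w x = -((Multiplicative.toAdd (φ (Units.mk0 _ (hne hx))) : G) : ℝ) := fun hx => dif_neg hx
  refine ⟨⟨G, hG, w, fun x y hx hy => ?_, fun x y hx hy => ?_, fun x hx => ?_, fun g hg hg0 => ?_⟩⟩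
  · have : Units.mk0 _ (hne (mul_ne_zero hx hy)) = Units.mk0 _ (hne hx) * Units.mk0 _ (hne hy) :=
      Units.ext (by simp)
    rw [hw hx, hw hy, hw (mul_ne_zero hx hy), this, map_mul, toAdd_mul, AddSubgroup.coe_add]
    ring
  · rw [hw hx, hw hy, neg_le_neg_iff, Subtype.coe_le_coe, Multiplicative.toAdd_le, map_le_map_iff,
      ← Units.val_le_val, Units.val_mk0, Units.val_mk0, hv.dvd_iff_le]
  · rw [hw hx]
    exact neg_mem (Multiplicative.toAdd (φ _)).2
  · set δ := φ.symm (Multiplicative.ofAdd (-⟨g, hg⟩))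
    obtain ⟨r, hr : v r = δ⟩ := Quotient.mk''_surjective (δ : ValuationRing.ValueGroup R K)
    have hδ : (δ : ValuationRing.ValueGroup R K) ≤ 1 := by
      rw [← Units.val_one, Units.val_le_val, ← map_le_map_iff φ, map_one]
      change φ (φ.symm _) ≤ 1
      rw [OrderMonoidIso.apply_symm_apply]
      exact Multiplicative.ofAdd_le.2 (neg_nonpos.2 (show (0 : G) ≤ ⟨g, hg⟩ from hg0))
    obtain ⟨x, rfl⟩ := hv.exists_of_le_one (show v r ≤ 1 from hr ▸ hδ)
    have hx : x ≠ 0 := by rintro rfl; exact δ.ne_zero (by simpa using hr.symm)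
    refine ⟨x, hx, ?_⟩
    rw [hw hx, show Units.mk0 _ (hne hx) = δ from Units.ext hr]
    simp [δ]

theorem exists_smul_mem_coeIdeal_of_map_le {R : Type*} [CommRing R] {S : Submonoid R}
    {P : Type*} [CommRing P] [Algebra R P] {M : Ideal R} [M.IsPrime] {C C' : Ideal R}
    (h : C.map (algebraMap R (Localization.AtPrime M)) ≤
      C'.map (algebraMap R (Localization.AtPrime M))) {x : P}
    (hx : ∃ u : R, u ∉ M ∧ u • x ∈ (C : FractionalIdeal S P)) :
    ∃ u : R, u ∉ M ∧ u • x ∈ (C' : FractionalIdeal S P) := by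
  obtain ⟨u, huM, c, hc, hcx⟩ := hx
  obtain ⟨m, hmM, hmc⟩ := (IsLocalization.algebraMap_mem_map_algebraMap_iff M.primeCompl
    (Localization.AtPrime M) C' c).1
    (h (Ideal.mem_map_of_mem _ hc))
  refine ⟨m * u, fun h => (Ideal.IsPrime.mem_or_mem inferInstance h).elim hmM huM,
    (FractionalIdeal.mem_coeIdeal _).2 ⟨m * c, hmc, ?_⟩⟩
  rw [mul_smul, ← hcx, map_mul, Algebra.smul_def]
  rfl

theorem Ideal.map_iInf_under_eq_of_not_under_le {R : Type*} [CommRing R] {ι : Type*} [Finite ι]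
    (P : ι → Ideal R) [∀ i, (P i).IsPrime] (h : ∀ i, Ideal (Localization.AtPrime (P i)))
    (hsep : ∀ i j, i ≠ j → ¬ (h j).under R ≤ P i) (i : ι) :
    (⨅ j, (h j).under R).map (algebraMap R (Localization.AtPrime (P i))) = h i := by
  classical
  have := Fintype.ofFinite ι
  have hprod : ¬ ∏ j ∈ Finset.univ.erase i, (h j).under R ≤ P i := by
    rw [Ideal.IsPrime.prod_le inferInstance]
    rintro ⟨j, hj, hle⟩
    exact hsep i j (Finset.ne_of_mem_erase hj).symm hle
  refine le_antisymm ?_ ?_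
  · calc _ ≤ ((h i).under R).map (algebraMap R (Localization.AtPrime (P i))) :=
          Ideal.map_mono (iInf_le _ i)
      _ = h i := IsLocalization.map_under (P i).primeCompl _ (h i)
  · calc h i = ((h i).under R * ∏ j ∈ Finset.univ.erase i, (h j).under R).map
          (algebraMap R (Localization.AtPrime (P i))) := by
          rw [Ideal.map_mul, IsLocalization.map_under (P i).primeCompl,
            IsLocalization.AtPrime.map_eq_top_of_not_le _ hprod, Ideal.mul_top]
      _ ≤ _ := Ideal.map_mono <| by
          rw [Finset.mul_prod_erase _ (fun j => (h j).under R) (Finset.mem_univ i),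
            ← Finset.inf_univ_eq_iInf]
          exact Ideal.prod_le_inf

theorem Ideal.map_algebraMap_atPrime_ne_bot {R : Type*} [CommRing R] [IsDomain R] {P : Ideal R}
    [P.IsPrime] {C : Ideal R} (hC : C ≠ ⊥) :
    C.map (algebraMap R (Localization.AtPrime P)) ≠ ⊥ :=
  (Ideal.map_eq_bot_iff_of_injective
    (IsLocalization.injective _ P.primeCompl_le_nonZeroDivisors)).not.2 hC

theorem CompleteRealValuation.not_under_map_le {R : Type*} [CommRing R] [IsDomain R]
    {P Q : Ideal R} [P.IsPrime] [Q.IsPrime] (V : CompleteRealValuation (Localization.AtPrime Q))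
    (hQP : ¬ Q ≤ P) {C : Ideal R} (hC : C ≠ ⊥) :
    ¬ (C.map (algebraMap R (Localization.AtPrime Q))).under R ≤ P := by
  obtain ⟨σ, hσQ, hσP⟩ := SetLike.not_le_iff_exists.1 hQP
  have hσ0 : σ ≠ 0 := fun h => hσP (h ▸ P.zero_mem)
  obtain ⟨k, hk⟩ := V.exists_pow_mem (Ideal.map_algebraMap_atPrime_ne_bot hC)
    ((map_ne_zero_iff _ (IsLocalization.injective _ Q.primeCompl_le_nonZeroDivisors)).2 hσ0)
    fun hu => (IsLocalization.AtPrime.isUnit_to_map_iff _ Q σ).1 hu hσQ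
  exact fun hle => hσP (Ideal.IsPrime.mem_of_pow_mem inferInstance k
    (hle (Ideal.mem_comap.2 (by rwa [map_pow]))))

theorem CompleteRealValuation.map_iInf_under_mul_iInf_under {R : Type*} [CommRing R] [IsDomain R]
    {ι : Type*} [Finite ι] (P : ι → Ideal R) [∀ i, (P i).IsPrime]
    (hP : Pairwise fun i k => ¬ P i ≤ P k)
    (V : ∀ i, CompleteRealValuation (Localization.AtPrime (P i)))
    {I : Ideal R} (hI : I ≠ ⊥) (h j : ∀ i, Ideal (Localization.AtPrime (P i)))
    (hhj : ∀ i, h i * j i = I.map (algebraMap R _)) (i : ι) :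
    ((⨅ k, (h k).under R) * ⨅ k, (j k).under R).map (algebraMap R (Localization.AtPrime (P i))) =
      I.map (algebraMap R _) := by
  have hsep (i k : ι) (hik : i ≠ k) : ¬ (I.map (algebraMap R _)).under R ≤ P i :=
    (V k).not_under_map_le (hP hik.symm) hI
  rw [Ideal.map_mul, Ideal.map_iInf_under_eq_of_not_under_le P h fun i k hik hle =>
      hsep i k hik ((Ideal.comap_mono (hhj k ▸ Ideal.mul_le_left)).trans hle),
    Ideal.map_iInf_under_eq_of_not_under_le P j fun i k hik hle =>
      hsep i k hik ((Ideal.comap_mono (hhj k ▸ Ideal.mul_le_right)).trans hle), hhj]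

theorem FractionalIdeal.spanSingleton_mul_ne_zero {R : Type*} [CommRing R] {S : Submonoid R}
    {P : Type*} [Field P] [Algebra R P] [IsLocalization S P] {x : P} (hx : x ≠ 0)
    {I : FractionalIdeal S P} (hI : I ≠ 0) : spanSingleton S x * I ≠ 0 := fun h => hI <| by
  rw [← one_mul I, ← spanSingleton_one, ← inv_mul_cancel₀ hx, ← spanSingleton_mul_spanSingleton,
    mul_assoc, h, mul_zero]

theorem FractionalIdeal.colon_singleton_ne_bot {D K : Type*} [CommRing D] [IsDomain D] [Field K]
    [Algebra D K] [IsFractionRing D K] {I : Ideal D} (hI : I ≠ ⊥) (x : K) :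
    ((I : FractionalIdeal D⁰ K) : Submodule D K).colon {x} ≠ ⊥ := by
  obtain ⟨d, hdI, hd0⟩ := Submodule.exists_mem_ne_zero_of_ne_bot hI
  obtain ⟨⟨a, q⟩, hq : x * algebraMap D K q = algebraMap D K a⟩ := IsLocalization.surj D⁰ x
  have hqd : q * d ∈ ((I : FractionalIdeal D⁰ K) : Submodule D K).colon {x} := by
    have : ((q : D) * d) • x = algebraMap D K (a * d) := by
      rw [Algebra.smul_def, map_mul, map_mul, ← hq]; ring
    rw [Submodule.mem_colon_singleton, this]
    exact (FractionalIdeal.mem_coeIdeal _).2 ⟨a * d, I.mul_mem_left a hdI, rfl⟩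
  exact fun h => mul_ne_zero (nonZeroDivisors.ne_zero q.2) hd0 ((Submodule.mem_bot D).1 (h ▸ hqd))

theorem IsMaxStarIdealOp.eq_of_le {D K : Type*} [CommRing D] [IsDomain D] [Field K] [Algebra D K]
    [IsFractionRing D K] {star : FractionalIdeal D⁰ K → FractionalIdeal D⁰ K} {M N : Ideal D}
    (hM : IsMaxStarIdealOp star M) (hN : IsMaxStarIdealOp star N) (h : M ≤ N) : M = N :=
  (hM.2.2.2 N hN.2.1 hN.2.2.1 h).symm

namespace StarOperation

variable {D K : Type*} [CommRing D] [IsDomain D] [Field K] [Algebra D K] [IsFractionRing D K]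
variable (s : StarOperation D K)

theorem star_ne_zero {I : FractionalIdeal D⁰ K} (hI : I ≠ 0) : s.star I ≠ 0 := fun h =>
  hI (FractionalIdeal.le_zero_iff.1 (h ▸ s.le_star I hI))

theorem star_eq_star_of_le_star {I J : FractionalIdeal D⁰ K} (hI : I ≠ 0) (hJ : J ≠ 0)
    (hIJ : I ≤ s.star J) (hJI : J ≤ s.star I) : s.star I = s.star J :=
  le_antisymm (s.star_star J hJ ▸ s.star_mono _ _ hI (s.star_ne_zero hJ) hIJ)
    (s.star_star I hI ▸ s.star_mono _ _ hJ (s.star_ne_zero hI) hJI)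

theorem star_sSup_of_isChain (hfc : s.HasFiniteCharacter) {ch : Set (Ideal D)}
    (hch : IsChain (· ≤ ·) ch) (hne : ch.Nonempty)
    (hstar : ∀ J ∈ ch, J ≠ ⊥ ∧ s.star (J : FractionalIdeal D⁰ K) = J) :
    s.star ((sSup ch : Ideal D) : FractionalIdeal D⁰ K) =
      ((sSup ch : Ideal D) : FractionalIdeal D⁰ K) := by
  obtain ⟨J₀, hJ₀⟩ := hne
  have hU : ((sSup ch : Ideal D) : FractionalIdeal D⁰ K) ≠ 0 :=
    FractionalIdeal.coeIdeal_ne_zero.2 fun h => (hstar J₀ hJ₀).1 (le_bot_iff.1 (h ▸ le_sSup hJ₀))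
  refine le_antisymm (fun x hx => ?_) (s.le_star _ hU)
  obtain ⟨F, hF0, hFfg, hFU, hxF⟩ := hfc _ hU x hx
  obtain ⟨f, rfl⟩ := FractionalIdeal.le_one_iff_exists_coeIdeal.1
    (hFU.trans FractionalIdeal.coeIdeal_le_one)
  have hffg : f.FG := Submodule.fg_of_fg_map_injective (Algebra.linearMap D K)
    (IsFractionRing.injective D K) hFfg
  obtain ⟨J, hJ, hfJ⟩ := (CompleteLattice.isCompactElement_iff_le_of_directed_sSup_le _ f).1
    ((Submodule.fg_iff_compact f).1 hffg) ch ⟨J₀, hJ₀⟩ hch.directedOn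
    ((FractionalIdeal.coeIdeal_le_coeIdeal K).1 hFU)
  have hxJ : x ∈ (J : FractionalIdeal D⁰ K) := (hstar J hJ).2 ▸
    s.star_mono _ _ hF0 (FractionalIdeal.coeIdeal_ne_zero.2 (hstar J hJ).1)
      ((FractionalIdeal.coeIdeal_le_coeIdeal K).2 hfJ) hxF
  exact (FractionalIdeal.coeIdeal_le_coeIdeal K).2 (le_sSup hJ) hxJ

theorem exists_isMaxStarIdealOp_le (hfc : s.HasFiniteCharacter) {c : Ideal D} (hc : c ≠ ⊥)
    (hc1 : s.star (c : FractionalIdeal D⁰ K) ≠ 1) :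
    ∃ M : Ideal D, IsMaxStarIdealOp s.star M ∧ c ≤ M := by
  have hc' : (c : FractionalIdeal D⁰ K) ≠ 0 := FractionalIdeal.coeIdeal_ne_zero.2 hc
  obtain ⟨c₀, hc₀⟩ := FractionalIdeal.le_one_iff_exists_coeIdeal.1
    (s.star_one ▸ s.star_mono _ 1 hc' one_ne_zero FractionalIdeal.coeIdeal_le_one)
  have hcc₀ : c ≤ c₀ := (FractionalIdeal.coeIdeal_le_coeIdeal K).1 (hc₀ ▸ s.le_star _ hc')
  set S : Set (Ideal D) := {J | J ≠ ⊥ ∧ J ≠ ⊤ ∧ s.star (J : FractionalIdeal D⁰ K) = J}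
  have hc₀S : c₀ ∈ S := ⟨fun h => hc (le_bot_iff.1 (h ▸ hcc₀)),
    fun h => hc1 (by rw [← hc₀, h, FractionalIdeal.coeIdeal_top]), by rw [hc₀, s.star_star _ hc']⟩
  obtain ⟨M, hc₀M, hM⟩ := zorn_le_nonempty₀ S (fun ch hchS hch J hJ => ⟨sSup ch,
    ⟨fun h => (hchS hJ).1 (le_bot_iff.1 (h ▸ le_sSup hJ)),
      fun h => by
        obtain ⟨J', hJ', h1⟩ := (Submodule.mem_sSup_of_directed ⟨J, hJ⟩ hch.directedOn).1
          (h ▸ Submodule.mem_top : (1 : D) ∈ sSup ch)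
        exact (hchS hJ').2.1 ((Ideal.eq_top_iff_one _).2 h1),
      s.star_sSup_of_isChain hfc hch ⟨J, hJ⟩ fun J' hJ' => ⟨(hchS hJ').1, (hchS hJ').2.2⟩⟩,
    fun _ => le_sSup⟩) c₀ hc₀S
  exact ⟨M, ⟨hM.1.1, hM.1.2.1, hM.1.2.2, fun J hJ hJs hMJ =>
    (hM.2 ⟨fun h => hM.1.1 (le_bot_iff.1 (h ▸ hMJ)), hJ, hJs⟩ hMJ).antisymm hMJ⟩, hcc₀.trans hc₀M⟩

/-- The underlying set of `I^{~*} = ⋂ I·D_M` over the maximal `*`-ideals `M`: `x ∈ I·D_M` is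
witnessed by a denominator `u ∉ M` with `u • x ∈ I`. -/
def tilde (I : FractionalIdeal D⁰ K) : Set K :=
  {x | ∀ M : Ideal D, IsMaxStarIdealOp s.star M → ∃ u : D, u ∉ M ∧ u • x ∈ I}

theorem subset_tilde (I : FractionalIdeal D⁰ K) : (I : Set K) ⊆ s.tilde I := fun x hx M hM =>
  ⟨1, fun h => hM.2.1 ((Ideal.eq_top_iff_one M).2 h), by rwa [one_smul]⟩

theorem tilde_subset_star (hfc : s.HasFiniteCharacter) {I : Ideal D} (hI : I ≠ ⊥) :
    s.tilde I ⊆ s.star I := by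
  intro x hx
  rcases eq_or_ne x 0 with rfl | hx0
  · exact (s.star (I : FractionalIdeal D⁰ K) : Submodule D K).zero_mem
  set c := ((I : FractionalIdeal D⁰ K) : Submodule D K).colon {x}
  have hc : (c : FractionalIdeal D⁰ K) ≠ 0 :=
    FractionalIdeal.coeIdeal_ne_zero.2 (FractionalIdeal.colon_singleton_ne_bot hI x)
  -- the conductor `c` of `x` into `I` lies in no maximal `*`-ideal, so `c* = D`
  have hc1 : s.star (c : FractionalIdeal D⁰ K) = 1 := by
    by_contra h
    obtain ⟨M, hM, hcM⟩ :=
      s.exists_isMaxStarIdealOp_le hfc (FractionalIdeal.colon_singleton_ne_bot hI x) h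
    obtain ⟨u, huM, hux⟩ := hx M hM
    exact huM (hcM (Submodule.mem_colon_singleton.2 hux))
  have hxc : FractionalIdeal.spanSingleton D⁰ x * c ≤ I :=
    FractionalIdeal.spanSingleton_mul_le_iff.2 fun z hz => by
      obtain ⟨u, hu, rfl⟩ := (FractionalIdeal.mem_coeIdeal _).1 hz
      rw [mul_comm, ← Algebra.smul_def]
      exact Submodule.mem_colon_singleton.1 hu
  have := s.star_mono _ _ (FractionalIdeal.spanSingleton_mul_ne_zero hx0 hc)
    (FractionalIdeal.coeIdeal_ne_zero.2 hI) hxc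
  rw [s.star_smul x hx0 _ hc, hc1, mul_one] at this
  exact this (FractionalIdeal.mem_spanSingleton_self _ x)

theorem tilde_eq_of_map_eq {I C : Ideal D}
    (h : ∀ M : Ideal D, IsMaxStarIdealOp s.star M → ∃ _ : M.IsPrime,
      I.map (algebraMap D (Localization.AtPrime M)) =
        C.map (algebraMap D (Localization.AtPrime M))) :
    s.tilde I = s.tilde C :=
  Set.ext fun _ =>
    ⟨fun hx M hM => (h M hM).elim fun _ hIC => exists_smul_mem_coeIdeal_of_map_le hIC.le (hx M hM),
      fun hx M hM => (h M hM).elim fun _ hIC => exists_smul_mem_coeIdeal_of_map_le hIC.ge (hx M hM)⟩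

theorem star_eq_star_of_tilde_eq (hfc : s.HasFiniteCharacter) {I C : Ideal D} (hI : I ≠ ⊥)
    (hC : C ≠ ⊥) (h : s.tilde I = s.tilde C) :
    s.star (I : FractionalIdeal D⁰ K) = s.star (C : FractionalIdeal D⁰ K) :=
  s.star_eq_star_of_le_star (FractionalIdeal.coeIdeal_ne_zero.2 hI)
    (FractionalIdeal.coeIdeal_ne_zero.2 hC)
    ((s.subset_tilde _).trans (h ▸ s.tilde_subset_star hfc hC))
    ((s.subset_tilde _).trans (h ▸ s.tilde_subset_star hfc hI))

theorem exists_tilde_eq_of_mul_le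
    (ha : ∀ x : D, x ≠ 0 → {M : Ideal D | IsMaxStarIdealOp s.star M ∧ x ∈ M}.Finite)
    (hb : ∀ M : Ideal D, IsMaxStarIdealOp s.star M → ∃ _ : M.IsPrime,
      ∃ _ : IsDomain (Localization.AtPrime M), IsCompleteValuationDomain (Localization.AtPrime M))
    {I A B : Ideal D} (hI : I ≠ ⊥) (hA : A ≠ ⊥) (hAB : A * B ≤ I) :
    ∃ H J : Ideal D, A ≤ H ∧ B ≤ J ∧ H * J ≠ ⊥ ∧ s.tilde I = s.tilde (H * J : Ideal D) := by
  set T := {M | IsMaxStarIdealOp s.star M ∧ I ≤ M}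
  obtain ⟨x, hxI, hx0⟩ := Submodule.exists_mem_ne_zero_of_ne_bot hI
  have : Finite T := ((ha x hx0).subset fun M hM => ⟨hM.1, hM.2 hxI⟩).to_subtype
  have _ (M : T) : (M : Ideal D).IsPrime := (hb M M.2.1).fst
  have hV (M : T) : Nonempty (CompleteRealValuation (Localization.AtPrime (M : Ideal D))) :=
    (hb M M.2.1).snd.elim fun _ h => h.nonempty_completeRealValuation
  have hloc (M : T) : ∃ h j : Ideal (Localization.AtPrime (M : Ideal D)),
      h * j = I.map (algebraMap D _) ∧ A.map (algebraMap D _) ≤ h ∧ B.map (algebraMap D _) ≤ j :=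
    (hV M).some.exists_mul_eq_of_mul_le (Ideal.map_algebraMap_atPrime_ne_bot hA)
      (Ideal.map_algebraMap_atPrime_ne_bot hI) (by rw [← Ideal.map_mul]; exact Ideal.map_mono hAB)
  choose h j hhj hAh hBj using hloc
  have hIh (N : T) : I ≤ (h N).under D := Ideal.map_le_iff_le_comap.1 (hhj N ▸ Ideal.mul_le_left)
  have hIj (N : T) : I ≤ (j N).under D := Ideal.map_le_iff_le_comap.1 (hhj N ▸ Ideal.mul_le_right)
  set H := ⨅ N, (h N).under D
  set J := ⨅ N, (j N).under D
  have hIHJ : I * I ≤ H * J := Ideal.mul_mono (le_iInf hIh) (le_iInf hIj)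
  refine ⟨H, J, le_iInf fun N => Ideal.map_le_iff_le_comap.1 (hAh N),
    le_iInf fun N => Ideal.map_le_iff_le_comap.1 (hBj N),
    fun hHJ => mul_ne_zero hI hI (le_bot_iff.1 (hHJ ▸ hIHJ)), s.tilde_eq_of_map_eq fun M hM => ?_⟩
  obtain ⟨_, -⟩ := hb M hM
  refine ⟨inferInstance, ?_⟩
  by_cases hIM : I ≤ M
  · exact (CompleteRealValuation.map_iInf_under_mul_iInf_under (fun N : T => (N : Ideal D))
      (fun N N' hNN' hle => hNN' (Subtype.ext (N.2.1.eq_of_le N'.2.1 hle)))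
      (fun N => (hV N).some) hI h j hhj ⟨M, hM, hIM⟩).symm
  rw [IsLocalization.AtPrime.map_eq_top_of_not_le _ hIM,
    IsLocalization.AtPrime.map_eq_top_of_not_le _ fun hle =>
      hIM (((Ideal.IsPrime.mul_le inferInstance).1 (hIHJ.trans hle)).elim id id)]

theorem isSharp_of_tilde_eq_imp_star_eq
    (ha : ∀ x : D, x ≠ 0 → {M : Ideal D | IsMaxStarIdealOp s.star M ∧ x ∈ M}.Finite)
    (hb : ∀ M : Ideal D, IsMaxStarIdealOp s.star M → ∃ _ : M.IsPrime,
      ∃ _ : IsDomain (Localization.AtPrime M), IsCompleteValuationDomain (Localization.AtPrime M))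
    (t : StarOperation D K) (ht : ∀ I C : Ideal D, I ≠ ⊥ → C ≠ ⊥ → s.tilde I = s.tilde C →
      t.star (I : FractionalIdeal D⁰ K) = t.star C) :
    t.IsSharp := by
  intro I A B hI hA hB hAB
  obtain ⟨H, J, hAH, hBJ, hHJ, htilde⟩ := s.exists_tilde_eq_of_mul_le ha hb hI hA hAB
  have hH : H ≠ ⊥ := fun h => hA (le_bot_iff.1 (h ▸ hAH))
  have hJ : J ≠ ⊥ := fun h => hB (le_bot_iff.1 (h ▸ hBJ))
  refine ⟨H, J, hH, hJ, by rw [← FractionalIdeal.coeIdeal_mul]; exact ht I _ hI hHJ htilde,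
    ((FractionalIdeal.coeIdeal_le_coeIdeal K).2 hAH).trans
      (t.le_star _ (FractionalIdeal.coeIdeal_ne_zero.2 hH)),
    ((FractionalIdeal.coeIdeal_le_coeIdeal K).2 hBJ).trans
      (t.le_star _ (FractionalIdeal.coeIdeal_ne_zero.2 hJ))⟩

end StarOperation

/-- Let `*` be a star operation of finite character on `D` such
that (a) every nonzero element of `D` lies in only finitely many maximal `*`-ideals
and (b) for every maximal `*`-ideal `M`, `D_M` is a valuation domain with value
group a complete subgroup of the reals. Then `D` is `~*`-sharp (where
`I^{~*} = ⋂_M I·D_M`, over the maximal `*`-ideals `M`) and hence `*`-sharp. -/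
theorem statement9 (D : Type*) [CommRing D] [IsDomain D]
    (K : Type*) [Field K] [Algebra D K] [IsFractionRing D K]
    (s : StarOperation D K) (hfc : s.HasFiniteCharacter)
    (ha : ∀ x : D, x ≠ 0 → {M : Ideal D | IsMaxStarIdealOp s.star M ∧ x ∈ M}.Finite)
    (hb : ∀ M : Ideal D, IsMaxStarIdealOp s.star M → ∃ _ : M.IsPrime,
      ∃ _ : IsDomain (Localization.AtPrime M),
        IsCompleteValuationDomain (Localization.AtPrime M)) :
    (∀ ts : StarOperation D K,
      (∀ I : FractionalIdeal D⁰ K, I ≠ 0 → ∀ x : K,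
        (x ∈ ts.star I ↔ ∀ M : Ideal D, IsMaxStarIdealOp s.star M →
          ∃ u : D, u ∉ M ∧ u • x ∈ I)) →
      ts.IsSharp) ∧
    s.IsSharp := by
  refine ⟨fun ts hts => s.isSharp_of_tilde_eq_imp_star_eq ha hb ts fun I C hI hC h => ?_,
    s.isSharp_of_tilde_eq_imp_star_eq ha hb s fun I C hI hC => s.star_eq_star_of_tilde_eq hfc hI hC⟩
  ext x
  rw [hts _ (FractionalIdeal.coeIdeal_ne_zero.2 hI) x,
    hts _ (FractionalIdeal.coeIdeal_ne_zero.2 hC) x]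
  exact Set.ext_iff.1 h x
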